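/- For any integers n ≥ 0, m ≥ 1 and any prime p not dividing m, the polynomial congruence x^m · Σ_{j=0}^{n} s(n,j) Σ_{k=1}^{p-1} (−m)^{p-1-k} B_{j+k}(x) ≡ (−1)^{m+n-1} x^p · D_{m+n-1}(1−x) (mod p) holds coefficientwise. -/

import Mathlib

open Polynomial Finset

/-- Stirling numbers of the second kind. -/
def stirling2 : ℕ → ℕ → ℕ
  | 0, 0 => 1
  | 0, _ + 1 => 0
  | _ + 1, 0 => 0
  | n + 1, k + 1 => (k + 1) * stirling2 n (k + 1) + stirling2 n k

/-- Signed Stirling numbers of the first kind. -/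
def stirling1 : ℕ → ℕ → ℤ
  | 0, 0 => 1
  | 0, _ + 1 => 0
  | n + 1, 0 => -(n : ℤ) * stirling1 n 0
  | n + 1, k + 1 => stirling1 n k - (n : ℤ) * stirling1 n (k + 1)

/-- The Bell polynomial `B_m(x) = ∑_{j=0}^m S(m,j) x^j` over `ℤ`. -/
noncomputable def bellPoly (m : ℕ) : Polynomial ℤ :=
  ∑ j ∈ range (m + 1), (stirling2 m j : ℤ) • X ^ j

/-- The derangement polynomial `D_m(x) = ∑_{j=0}^m C(m,j) j! (x-1)^{m-j}` over `ℤ`. -/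
noncomputable def derPoly (m : ℕ) : Polynomial ℤ :=
  ∑ j ∈ range (m + 1), ((m.choose j * j.factorial : ℕ) : ℤ) • (X - 1) ^ (m - j)

/-- The Bell numbers `B_m = ∑_j S(m,j)`. -/
def bell (m : ℕ) : ℕ := ∑ j ∈ range (m + 1), stirling2 m j

/-!
Let `φ` be the linear map `X ^ k ↦ B_k(X)`. Touchard's recurrence `B_{k+1} = X (B_k + B_k')`
gives `φ (X f) = X φ (f (X + 1))`, hence `φ ((X)_n f) = X ^ n φ (f (X + n))` for the falling
factorial `(X)_n = ∑_j s(n,j) X ^ j`. The left side is therefore `X ^ m φ ((X)_n S)` with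
`S = ∑_k (-m) ^ (p-1-k) X ^ k`, and modulo `p` we have `(X + m) S = X ^ p - X = (X)_p`.
Hence `S (X + n) = (X)_r (X - r - 1)⋯(X - r - s)` with `s ≡ m + n - 1` and `r = p - 1 - s`,
and `φ ((X - 1)⋯(X - s)) = (-1) ^ s D_s(1 - X)` since both sides satisfy the recurrence coming
from `D_{s+1} = (s + 1) D_s + (X - 1) ^ (s + 1)`. In characteristic `p` that recurrence also
multiplies `(-1) ^ s D_s(1 - X)` by `X ^ p` when `s` increases by `p`.
-/

theorem coeff_descPochhammer_int (n j : ℕ) : (descPochhammer ℤ n).coeff j = stirling1 n j := by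
  induction n generalizing j with
  | zero => cases j <;> simp [stirling1, coeff_one]
  | succ n ih =>
    rw [descPochhammer_succ_right, ← C_eq_natCast]
    cases j with
    | zero => simp [mul_coeff_zero, ih, stirling1, mul_comm]
    | succ j => rw [coeff_mul_X_sub_C, ih, ih, stirling1]; ring

theorem sum_stirling1_mul_X_pow (n : ℕ) :
    ∑ j ∈ range (n + 1), C (stirling1 n j) * X ^ j = descPochhammer ℤ n := by
  conv_rhs => rw [as_sum_range_C_mul_X_pow (descPochhammer ℤ n), descPochhammer_natDegree]
  simp only [coeff_descPochhammer_int]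

theorem stirling2_eq_zero_of_lt : ∀ {n k : ℕ}, n < k → stirling2 n k = 0
  | 0, _ + 1, _ => rfl
  | n + 1, k + 1, h => by
    rw [stirling2, stirling2_eq_zero_of_lt (by omega), stirling2_eq_zero_of_lt (by omega), mul_zero]

theorem coeff_bellPoly (n j : ℕ) : (bellPoly n).coeff j = stirling2 n j := by
  simp only [bellPoly, finsetSum_coeff, coeff_smul, coeff_X_pow, smul_eq_mul, mul_ite, mul_one,
    mul_zero, sum_ite_eq, mem_range]
  split_ifs with h
  · rfl
  · rw [stirling2_eq_zero_of_lt (by omega), Nat.cast_zero]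

theorem bellPoly_succ (n : ℕ) :
    bellPoly (n + 1) = X * (bellPoly n + derivative (bellPoly n)) := by
  ext j
  cases j with
  | zero => simp [coeff_bellPoly, stirling2]
  | succ j =>
    rw [coeff_X_mul, coeff_add, coeff_derivative, coeff_bellPoly, coeff_bellPoly, coeff_bellPoly,
      stirling2]
    push_cast
    ring

theorem derPoly_succ (s : ℕ) :
    derPoly (s + 1) = (s + 1 : ℤ[X]) * derPoly s + (X - 1) ^ (s + 1) := by
  have hcoeff (j : ℕ) :
      (s + 1).choose (j + 1) * (j + 1).factorial = (s + 1) * (s.choose j * j.factorial) := by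
    rw [Nat.factorial_succ, ← mul_assoc, ← Nat.add_one_mul_choose_eq, mul_assoc]
  rw [derPoly, sum_range_succ', derPoly, mul_sum]
  simp only [hcoeff, Nat.add_sub_add_right, Nat.choose_zero_right, Nat.factorial_zero, mul_one,
    Nat.cast_one, one_smul, Nat.sub_zero, smul_eq_C_mul, Nat.cast_mul, map_mul]
  congr 1
  refine sum_congr rfl fun j _ => ?_
  simp only [Nat.cast_add, Nat.cast_one, map_add, map_one, map_natCast]
  ring

noncomputable def signedDerPoly (s : ℕ) : ℤ[X] := (-1) ^ s * (derPoly s).comp (1 - X)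

theorem signedDerPoly_zero : signedDerPoly 0 = 1 := by
  simp [signedDerPoly, derPoly]

theorem signedDerPoly_succ (s : ℕ) :
    signedDerPoly (s + 1) = X ^ (s + 1) - (s + 1 : ℤ[X]) * signedDerPoly s := by
  simp only [signedDerPoly, derPoly_succ, add_comp, mul_comp, pow_comp, sub_comp, X_comp,
    one_comp, natCast_comp]
  have hsq : ((-1 : ℤ[X]) ^ (s + 1)) ^ 2 = 1 := by rw [← pow_mul, pow_mul', neg_one_sq, one_pow]
  linear_combination X ^ (s + 1) * hsq

section CommRing

variable {R : Type*} [CommRing R]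

theorem map_bellPoly_succ (n : ℕ) :
    (bellPoly (n + 1)).map (Int.castRingHom R) =
      X * ((bellPoly n).map (Int.castRingHom R) +
        derivative ((bellPoly n).map (Int.castRingHom R))) := by
  rw [bellPoly_succ, Polynomial.map_mul, Polynomial.map_add, map_X, derivative_map]

variable (R) in
noncomputable def bellTransform : R[X] →ₗ[R] R[X] :=
  lsum fun k => LinearMap.id.smulRight ((bellPoly k).map (Int.castRingHom R))

theorem bellTransform_monomial (k : ℕ) (a : R) :
    bellTransform R (monomial k a) = C a * (bellPoly k).map (Int.castRingHom R) := by
  simp [bellTransform, smul_eq_C_mul]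

theorem bellTransform_X_pow (k : ℕ) :
    bellTransform R (X ^ k) = (bellPoly k).map (Int.castRingHom R) := by
  rw [← monomial_one_right_eq_X_pow, bellTransform_monomial, C_1, one_mul]

theorem bellTransform_C_mul (a : R) (f : R[X]) :
    bellTransform R (C a * f) = C a * bellTransform R f := by
  rw [← smul_eq_C_mul, map_smul, smul_eq_C_mul]

theorem bellTransform_one : bellTransform R 1 = 1 := by
  simpa [bellPoly, stirling2] using bellTransform_X_pow (R := R) 0

theorem bellTransform_X_mul_eq_derivative (f : R[X]) :
    bellTransform R (X * f) = X * (bellTransform R f + derivative (bellTransform R f)) := by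
  induction f using Polynomial.induction_on' with
  | add f g hf hg => rw [mul_add, map_add, hf, hg, map_add, derivative_add]; ring
  | monomial k a =>
    rw [X_mul_monomial, bellTransform_monomial, bellTransform_monomial, map_bellPoly_succ,
      derivative_C_mul]
    ring

theorem bellTransform_comp_X_add_one (f : R[X]) :
    bellTransform R (f.comp (X + 1)) = bellTransform R f + derivative (bellTransform R f) := by
  induction f using Polynomial.induction_on with
  | C a =>
    rw [C_comp, ← mul_one (C a), bellTransform_C_mul, bellTransform_one, derivative_C_mul,
      derivative_one]
    ring
  | add f g hf hg => rw [add_comp, map_add, hf, hg, map_add, derivative_add]; ring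
  | monomial k a ih =>
    rw [pow_succ', mul_left_comm, mul_comp, X_comp, add_mul, one_mul, map_add,
      bellTransform_X_mul_eq_derivative, bellTransform_X_mul_eq_derivative, ih]
    simp only [derivative_mul, derivative_add, derivative_X]
    ring

theorem bellTransform_X_mul (f : R[X]) :
    bellTransform R (X * f) = X * bellTransform R (f.comp (X + 1)) := by
  rw [bellTransform_X_mul_eq_derivative, bellTransform_comp_X_add_one]

theorem bellTransform_descPochhammer_mul (n : ℕ) (f : R[X]) :
    bellTransform R (descPochhammer R n * f) =
      X ^ n * bellTransform R (f.comp (X + (n : R[X]))) := by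
  induction n generalizing f with
  | zero => simp
  | succ n ih =>
    rw [descPochhammer_succ_left, mul_assoc, bellTransform_X_mul, mul_comp, comp_assoc, sub_comp,
      X_comp, one_comp, add_sub_cancel_right, comp_X, ih, comp_assoc, add_comp, X_comp,
      one_comp, pow_succ', mul_assoc, Nat.cast_succ, add_assoc]

theorem map_signedDerPoly_succ (s : ℕ) :
    (signedDerPoly (s + 1)).map (Int.castRingHom R) =
      X ^ (s + 1) - (s + 1 : R[X]) * (signedDerPoly s).map (Int.castRingHom R) := by
  simp [signedDerPoly_succ]

theorem map_signedDerPoly_add_char (p : ℕ) [CharP R p] (s : ℕ) :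
    (signedDerPoly (s + p)).map (Int.castRingHom R) =
      X ^ p * (signedDerPoly s).map (Int.castRingHom R) := by
  induction s with
  | zero =>
    cases p with
    | zero => simp
    | succ p =>
      rw [zero_add, map_signedDerPoly_succ, ← Nat.cast_succ, CharP.cast_eq_zero, zero_mul,
        sub_zero, signedDerPoly_zero, Polynomial.map_one, mul_one]
  | succ s ih =>
    rw [Nat.add_right_comm, map_signedDerPoly_succ, ih, map_signedDerPoly_succ]
    have hcast : ((s + p : ℕ) : R[X]) = s := by simp
    rw [hcast]
    ring

theorem map_signedDerPoly_add_mul_char (p : ℕ) [CharP R p] (s t : ℕ) :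
    (signedDerPoly (s + p * t)).map (Int.castRingHom R) =
      X ^ (p * t) * (signedDerPoly s).map (Int.castRingHom R) := by
  induction t with
  | zero => simp
  | succ t ih => rw [mul_add_one, ← add_assoc, map_signedDerPoly_add_char, ih, pow_add]; ring

theorem bellTransform_descPochhammer (n : ℕ) : bellTransform R (descPochhammer R n) = X ^ n := by
  simpa [bellTransform_one] using bellTransform_descPochhammer_mul n (1 : R[X])

theorem bellTransform_descPochhammer_comp_X_sub_one (s : ℕ) :
    bellTransform R ((descPochhammer R s).comp (X - 1)) =
      (signedDerPoly s).map (Int.castRingHom R) := by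
  induction s with
  | zero => simp [bellTransform_one, signedDerPoly_zero]
  | succ s ih =>
    have hcast : (s : R[X]) + 1 = C ((s : R) + 1) := by simp
    rw [descPochhammer_succ_comp_X_sub_one, smul_eq_mul, hcast, map_sub, bellTransform_C_mul,
      bellTransform_descPochhammer, ih, map_signedDerPoly_succ, ← hcast]

theorem X_sub_C_mul_sum_Icc (c : R) {q : ℕ} (hq : 1 ≤ q) :
    (X - C c) * ∑ k ∈ Icc 1 (q - 1), C (c ^ (q - 1 - k)) * X ^ k =
      X ^ q - C (c ^ (q - 1)) * X := by
  have hIcc : Icc 1 (q - 1) = Ico 1 q := by ext; simp only [mem_Icc, mem_Ico]; omega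
  simpa [hIcc, mul_comm, C_pow] using mul_geom_sum₂_Ico X (C c) hq

variable (R) in
theorem map_sum_stirling1_mul_bellPoly (n : ℕ) (S : Finset ℕ) (b : ℕ → ℤ) :
    (∑ j ∈ range (n + 1), C (stirling1 n j) * ∑ k ∈ S, C (b k) * bellPoly (j + k)).map
        (Int.castRingHom R) =
      bellTransform R (descPochhammer R n * ∑ k ∈ S, C ((b k : R)) * X ^ k) := by
  rw [← descPochhammer_map (Int.castRingHom R), ← sum_stirling1_mul_X_pow]
  simp only [Polynomial.map_sum, Polynomial.map_mul, map_C, Polynomial.map_pow, map_X]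
  rw [sum_mul_sum]
  simp only [map_sum, mul_sum]
  refine sum_congr rfl fun j _ => sum_congr rfl fun k _ => ?_
  rw [mul_mul_mul_comm, ← pow_add, mul_assoc, bellTransform_C_mul, bellTransform_C_mul,
    bellTransform_X_pow]
  simp only [eq_intCast]

end CommRing

section ZModP

variable (p : ℕ) [Fact p.Prime]

theorem descPochhammer_zmod_eq_X_pow_sub_X : descPochhammer (ZMod p) p = X ^ p - X := by
  have hp := (Fact.out : p.Prime).one_lt
  rw [← sub_eq_zero]
  refine eq_zero_of_natDegree_lt_card_of_eval_eq_zero _ Function.injective_id (fun a => ?_) ?_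
  · rw [eval_sub, ← ZMod.natCast_zmod_val a, id, descPochhammer_eval_eq_descFactorial,
      Nat.descFactorial_eq_zero_iff_lt.mpr (ZMod.val_lt a)]
    simp [ZMod.pow_card]
  · rw [ZMod.card]
    refine IsMonicOfDegree.natDegree_sub_lt (by omega) ⟨descPochhammer_natDegree _ _,
      monic_descPochhammer _ _⟩ ((isMonicOfDegree_X_pow (R := ZMod p) p).sub ?_)
    rwa [natDegree_X]

theorem X_add_natCast_mul_sum_Icc {m : ℕ} (hm : (m : ZMod p) ≠ 0) :
    (X + (m : (ZMod p)[X])) * ∑ k ∈ Icc 1 (p - 1), C ((-(m : ZMod p)) ^ (p - 1 - k)) * X ^ k =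
      X ^ p - X := by
  have h := X_sub_C_mul_sum_Icc (-(m : ZMod p)) (Fact.out : p.Prime).one_lt.le
  rwa [ZMod.pow_card_sub_one_eq_one (neg_ne_zero.mpr hm), map_neg, map_natCast, sub_neg_eq_add,
    C_1, one_mul] at h

theorem X_add_natCast_mul_comp_X_add_natCast {m : ℕ} {f : (ZMod p)[X]}
    (hf : (X + (m : (ZMod p)[X])) * f = X ^ p - X) (n : ℕ) :
    (X + ((m + n : ℕ) : (ZMod p)[X])) * f.comp (X + (n : (ZMod p)[X])) = X ^ p - X := by
  have hfrob : (X + (n : (ZMod p)[X])) ^ p = X ^ p + (n : (ZMod p)[X]) := by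
    rw [add_pow_char, ← C_eq_natCast, ← C_pow, ZMod.pow_card]
  have h := congrArg (·.comp (X + (n : (ZMod p)[X]))) hf
  simp only [mul_comp, add_comp, sub_comp, pow_comp, X_comp, natCast_comp, hfrob] at h
  push_cast
  linear_combination h

theorem bellTransform_eq_of_X_add_mul_eq (s : ℕ) {f : (ZMod p)[X]}
    (hf : (X + ((s + 1 : ℕ) : (ZMod p)[X])) * f = X ^ p - X) :
    bellTransform (ZMod p) f =
      X ^ (p - 1 - s % p) * (signedDerPoly (s % p)).map (Int.castRingHom (ZMod p)) := by
  have hp := (Fact.out : p.Prime).pos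
  set r := p - 1 - s % p
  have hr : ((s + 1 : ℕ) : ZMod p) = -(r : ZMod p) := by
    have hsum : s + 1 + r = (s - s % p) + p := by
      have := Nat.mod_le s p
      have := Nat.mod_lt s hp
      omega
    rw [eq_neg_iff_add_eq_zero, ← Nat.cast_add, ZMod.natCast_eq_zero_iff, hsum]
    exact dvd_add (Nat.dvd_sub_mod s) dvd_rfl
  have hsplit : X ^ p - X = (X - C (r : ZMod p)) * (descPochhammer (ZMod p) r *
      (descPochhammer (ZMod p) (s % p)).comp (X - ((r + 1 : ℕ) : (ZMod p)[X]))) := by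
    have hpr : r + 1 + s % p = p := by have := Nat.mod_lt s hp; omega
    rw [← descPochhammer_zmod_eq_X_pow_sub_X, C_eq_natCast, ← mul_assoc, mul_comm (X - _),
      ← descPochhammer_succ_right, descPochhammer_mul, hpr]
  have hf' : f = descPochhammer (ZMod p) r *
      (descPochhammer (ZMod p) (s % p)).comp (X - ((r + 1 : ℕ) : (ZMod p)[X])) := by
    refine mul_left_cancel₀ (X_sub_C_ne_zero (r : ZMod p)) ?_
    rw [← hsplit, ← hf, ← C_eq_natCast, hr, map_neg, sub_eq_add_neg]
  have hshift : X + (r : (ZMod p)[X]) - ((r + 1 : ℕ) : (ZMod p)[X]) = X - 1 := by push_cast; ring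
  rw [hf', bellTransform_descPochhammer_mul, comp_assoc, sub_comp, X_comp, natCast_comp, hshift,
    bellTransform_descPochhammer_comp_X_sub_one]

end ZModP

theorem dvd_coeff_sub_of_map_eq {p : ℕ} {f g : ℤ[X]}
    (h : f.map (Int.castRingHom (ZMod p)) = g.map (Int.castRingHom (ZMod p))) (i : ℕ) :
    (p : ℤ) ∣ (f - g).coeff i := by
  rw [← ZMod.intCast_zmod_eq_zero_iff_dvd, coeff_sub, Int.cast_sub, sub_eq_zero]
  simpa using congrArg (coeff · i) h

theorem sun_zagier_poly'_general (n m p : ℕ) (hp : p.Prime) (hpm : ¬ p ∣ m) :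
    ∀ i, (p : ℤ) ∣
      (X ^ m * ∑ j ∈ range (n + 1), C (stirling1 n j) *
          ∑ k ∈ Icc 1 (p - 1), C ((-(m : ℤ)) ^ (p - 1 - k)) * bellPoly (j + k) -
        (-1) ^ (m + n - 1) * X ^ p * (derPoly (m + n - 1)).comp (1 - X)).coeff i := by
  have := Fact.mk hp
  have hm : (m : ZMod p) ≠ 0 := by rwa [Ne, ZMod.natCast_eq_zero_iff]
  set N := m + n - 1
  have hN : m + n = N + 1 := by
    have : m ≠ 0 := by rintro rfl; exact hpm (dvd_zero p)
    omega
  have hS := X_add_natCast_mul_comp_X_add_natCast p (X_add_natCast_mul_sum_Icc p hm) n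
  rw [hN] at hS
  have hRHS : (-1 : ℤ[X]) ^ N * X ^ p * (derPoly N).comp (1 - X) = X ^ p * signedDerPoly N := by
    rw [signedDerPoly]; ring
  rw [hRHS]
  refine dvd_coeff_sub_of_map_eq ?_
  rw [Polynomial.map_mul, Polynomial.map_pow, map_X, map_sum_stirling1_mul_bellPoly,
    Polynomial.map_mul, Polynomial.map_pow, map_X]
  simp only [Int.cast_pow, Int.cast_neg, Int.cast_natCast]
  rw [bellTransform_descPochhammer_mul, bellTransform_eq_of_X_add_mul_eq p N hS]
  conv_rhs => rw [← Nat.mod_add_div N p, map_signedDerPoly_add_mul_char]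
  simp only [← mul_assoc, ← pow_add]
  congr 2
  have := Nat.mod_add_div N p
  have := Nat.mod_lt N hp.pos
  omega

theorem sun_zagier_poly' (n m p : ℕ) (hm : 1 ≤ m) (hp : p.Prime) (hpm : ¬ p ∣ m) :
    ∀ i, (p : ℤ) ∣
      (X ^ m * ∑ j ∈ range (n + 1), C (stirling1 n j) *
          ∑ k ∈ Icc 1 (p - 1), C ((-(m : ℤ)) ^ (p - 1 - k)) * bellPoly (j + k) -
        (-1) ^ (m + n - 1) * X ^ p * (derPoly (m + n - 1)).comp (1 - X)).coeff i :=
  sun_zagier_poly'_general n m p hp hpm
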